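/- For a connected unweighted graph and any subset S of vertices, \sum_{e \in E(S, V\S)} B_e^2 \geq |S||V\S| / (|E(S, V\S)| \cdot n) = \Theta(S)^{-1}. In particular, some crossing edge e has B_e^2 \geq \Theta(S)^{-1} / |E(S, V\S)|. -/

import Mathlib

/-!
The test vector `z = 𝟙_S - (|S|/n)·𝟙` is orthogonal to the constants, which span `ker L` for a
connected graph, so `L⁺ L z = z` and `‖z‖² = zᵀ L⁺ B Bᵀ z = ⟨Bᵀ L⁺ z, Bᵀ z⟩`. Since `Bᵀ z` is `±1` on
the crossing edges and `0` elsewhere, `‖z‖² ≤ ∑_{e crossing} |bₑᵀ L⁺ z|`, and Cauchy–Schwarz gives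
`(bₑᵀ L⁺ z)² ≤ Bₑ² ‖z‖²`, hence `‖z‖⁴ ≤ |E(S, V∖S)| · ∑ Bₑ² · ‖z‖²`. As `‖z‖² = |S||V∖S|/n`, this is
the sum bound; the bound for a single edge follows by averaging.
-/

open Matrix BigOperators Finset

namespace Matrix

variable {m n R : Type*} [Fintype m] [Fintype n]

section CommSemiring

variable [CommSemiring R]

def IsMoorePenroseInverse (A : Matrix m n R) (X : Matrix n m R) : Prop :=
  A * X * A = A ∧ X * A * X = X ∧ (A * X)ᵀ = A * X ∧ (X * A)ᵀ = X * A

namespace IsMoorePenroseInverse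

variable {A : Matrix m n R} {X Y : Matrix n m R}

theorem transpose (h : A.IsMoorePenroseInverse X) : Aᵀ.IsMoorePenroseInverse Xᵀ := by
  obtain ⟨hAXA, hXAX, hAX, hXA⟩ := h
  refine ⟨?_, ?_, ?_, ?_⟩
  · simpa only [transpose_mul, Matrix.mul_assoc] using congrArg Matrix.transpose hAXA
  · simpa only [transpose_mul, Matrix.mul_assoc] using congrArg Matrix.transpose hXAX
  · rw [← transpose_mul, hXA, hXA]
  · rw [← transpose_mul, hAX, hAX]

theorem eq_mul_mul (hX : A.IsMoorePenroseInverse X) (hY : A.IsMoorePenroseInverse Y) :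
    X = X * A * Y := by
  obtain ⟨-, hXAX, hAX, -⟩ := hX
  obtain ⟨hAYA, -, hAY, -⟩ := hY
  have hAt : Aᵀ = Aᵀ * (A * Y) := by
    conv_lhs => rw [← hAYA]
    rw [transpose_mul, hAY]
  calc X = X * (A * X)ᵀ := by rw [hAX, ← Matrix.mul_assoc, hXAX]
    _ = X * Xᵀ * (Aᵀ * (A * Y)) := by rw [← hAt, transpose_mul, Matrix.mul_assoc]
    _ = X * (A * X)ᵀ * A * Y := by simp only [transpose_mul, Matrix.mul_assoc]
    _ = X * A * Y := by rw [hAX, ← Matrix.mul_assoc X A X, hXAX]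

theorem unique (hX : A.IsMoorePenroseInverse X) (hY : A.IsMoorePenroseInverse Y) : X = Y := by
  have hYX : Yᵀ = Yᵀ * Aᵀ * Xᵀ := hY.transpose.eq_mul_mul hX.transpose
  calc X = X * A * Y := hX.eq_mul_mul hY
    _ = (Yᵀ * Aᵀ * Xᵀ)ᵀ := by simp only [transpose_mul, transpose_transpose, Matrix.mul_assoc]
    _ = Y := by rw [← hYX, transpose_transpose]

theorem isSymm {A : Matrix n n R} {X : Matrix n n R} (h : A.IsMoorePenroseInverse X)
    (hA : A.IsSymm) : X.IsSymm :=
  (hA.eq ▸ h.transpose).unique h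

end IsMoorePenroseInverse

theorem IsSymm.dotProduct_mulVec {X : Matrix n n R} (hX : X.IsSymm) (u v : n → R) :
    u ⬝ᵥ (X *ᵥ v) = (X *ᵥ u) ⬝ᵥ v := by
  rw [Matrix.dotProduct_mulVec, ← mulVec_transpose, hX.eq]

theorem dotProduct_self_eq_of_mul_mul_transpose_mulVec {A : Matrix m n R} {X : Matrix m m R}
    (hX : X.IsSymm) {z : m → R} (hz : (X * (A * Aᵀ)) *ᵥ z = z) :
    z ⬝ᵥ z = (Aᵀ *ᵥ (X *ᵥ z)) ⬝ᵥ (Aᵀ *ᵥ z) := by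
  nth_rewrite 2 [← hz]
  rw [← mulVec_mulVec, ← mulVec_mulVec, hX.dotProduct_mulVec, Matrix.dotProduct_mulVec,
    ← mulVec_transpose]

end CommSemiring

section OrderedRing

variable [CommRing R] [LinearOrder R] [IsStrictOrderedRing R]

theorem IsMoorePenroseInverse.mul_mulVec_eq_self {A : Matrix m n R} {X : Matrix n m R}
    (h : A.IsMoorePenroseInverse X) {z : n → R} (hz : ∀ k, A *ᵥ k = 0 → z ⬝ᵥ k = 0) :
    (X * A) *ᵥ z = z := by
  obtain ⟨hAXA, -, -, hXA⟩ := h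
  set w := z - (X * A) *ᵥ z
  have hAw : A *ᵥ w = 0 := by
    rw [mulVec_sub, mulVec_mulVec, ← Matrix.mul_assoc, hAXA, sub_self]
  have hww : w ⬝ᵥ w = 0 := by
    calc w ⬝ᵥ w = z ⬝ᵥ w - z ⬝ᵥ ((X * A) *ᵥ w) := by
          rw [sub_dotProduct, ← IsSymm.dotProduct_mulVec hXA z w]
      _ = 0 := by rw [← mulVec_mulVec, hAw, mulVec_zero, dotProduct_zero, hz w hAw, sub_zero]
  exact (sub_eq_zero.mp (dotProduct_self_eq_zero.mp hww)).symm

theorem IsSymm.dotProduct_mulVec_sq_le {X : Matrix n n R} (hX : X.IsSymm) (u v : n → R) :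
    (u ⬝ᵥ (X *ᵥ v)) ^ 2 ≤ (u ⬝ᵥ ((X * X) *ᵥ u)) * (v ⬝ᵥ v) := by
  rw [hX.dotProduct_mulVec, ← mulVec_mulVec, hX.dotProduct_mulVec]
  simpa only [dotProduct, sq] using sum_mul_sq_le_sq_mul_sq univ (X *ᵥ u) v

end OrderedRing

theorem single_sub_single_dotProduct [Ring R] [DecidableEq n] (a b : n) (w : n → R) :
    (Pi.single a 1 - Pi.single b 1) ⬝ᵥ w = w a - w b := by
  rw [sub_dotProduct, single_one_dotProduct, single_one_dotProduct]

end Matrix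

theorem le_card_mul_sum_of_sq_le {ι R : Type*} [Field R] [LinearOrder R] [IsStrictOrderedRing R]
    {s : Finset ι} {q : R} {d b : ι → R} (hq : 0 < q) (hqd : q ≤ ∑ i ∈ s, |d i|)
    (hdb : ∀ i ∈ s, d i ^ 2 ≤ b i * q) : q ≤ #s * ∑ i ∈ s, b i := by
  refine le_of_mul_le_mul_right ?_ hq
  calc q * q ≤ (∑ i ∈ s, |d i|) ^ 2 := by rw [← sq]; exact pow_le_pow_left₀ hq.le hqd 2
    _ ≤ #s * ∑ i ∈ s, |d i| ^ 2 := sq_sum_le_card_mul_sum_sq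
    _ ≤ #s * ∑ i ∈ s, b i * q := by
        simp only [sq_abs]; gcongr with i hi; exact hdb i hi
    _ = (#s * ∑ i ∈ s, b i) * q := by rw [← sum_mul, mul_assoc]

section Graph

variable {V E : Type*} [DecidableEq V] (R : Type*) [Field R] (src tgt : E → V)

def incidenceMatrix : Matrix V E R :=
  fun v e => (if v = src e then 1 else 0) - (if v = tgt e then 1 else 0)

def edgeBoundary [Fintype E] (S : Finset V) : Finset E :=
  univ.filter fun e => ¬(src e ∈ S ↔ tgt e ∈ S)

def centeredIndicator [Fintype V] (S : Finset V) : V → R :=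
  fun v => (if v ∈ S then 1 else 0) - #S / Fintype.card V

def biharmonicDistSq [Fintype V] (X : Matrix V V R) (a b : V) : R :=
  (Pi.single a 1 - Pi.single b 1) ⬝ᵥ ((X * X) *ᵥ (Pi.single a 1 - Pi.single b 1))

variable {R} [Fintype V]

theorem incidenceMatrix_transpose_mulVec (w : V → R) (e : E) :
    ((incidenceMatrix R src tgt)ᵀ *ᵥ w) e = (Pi.single (src e) 1 - Pi.single (tgt e) 1) ⬝ᵥ w := by
  simp only [mulVec]
  congr 1
  funext v
  simp [incidenceMatrix, Pi.single_apply]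

variable [Fintype E] [LinearOrder R] [IsStrictOrderedRing R]

theorem dotProduct_incidenceMatrix_transpose_mulVec_le (S : Finset V) (c : R) (d : E → R) :
    d ⬝ᵥ ((incidenceMatrix R src tgt)ᵀ *ᵥ fun v => (if v ∈ S then 1 else 0) - c) ≤
      ∑ e ∈ edgeBoundary src tgt S, |d e| := by
  rw [edgeBoundary, sum_filter, dotProduct]
  refine sum_le_sum fun e _ => ?_
  rw [incidenceMatrix_transpose_mulVec, single_sub_single_dotProduct, sub_sub_sub_cancel_right]
  by_cases hs : src e ∈ S <;> by_cases ht : tgt e ∈ S <;> simp [hs, ht, le_abs_self, neg_le_abs]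

theorem sum_centeredIndicator (S : Finset V) : ∑ v, centeredIndicator R S v = 0 := by
  rcases isEmpty_or_nonempty V with hV | hV
  · simp
  have hn : (Fintype.card V : R) ≠ 0 := by simp [Fintype.card_ne_zero]
  simp [centeredIndicator, sum_sub_distrib, mul_div_cancel₀ _ hn]

theorem centeredIndicator_dotProduct_self (S : Finset V) :
    centeredIndicator R S ⬝ᵥ centeredIndicator R S = #S * #Sᶜ / Fintype.card V := by
  rcases isEmpty_or_nonempty V with hV | hV
  · simp
  have hn : (Fintype.card V : R) ≠ 0 := by simp [Fintype.card_ne_zero]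
  set p : R := #S / Fintype.card V
  have hsq : ∀ v, centeredIndicator R S v * centeredIndicator R S v =
      (if v ∈ S then 1 else 0) * (1 - 2 * p) + p ^ 2 := by
    intro v; simp only [centeredIndicator]; split <;> ring
  simp only [dotProduct, hsq, sum_add_distrib, ← sum_mul, sum_boole, sum_const, card_univ,
    nsmul_eq_mul, card_compl, Nat.cast_sub (card_le_univ S), filter_mem_eq_inter, univ_inter, p]
  field_simp
  ring

theorem Matrix.IsMoorePenroseInverse.mul_mulVec_centeredIndicator {L X : Matrix V V R}
    (h : L.IsMoorePenroseInverse X) (hker : ∀ x, L *ᵥ x = 0 → ∃ c, x = Function.const V c) (S : Finset V) :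
    (X * L) *ᵥ centeredIndicator R S = centeredIndicator R S :=
  h.mul_mulVec_eq_self fun k hk => by
    obtain ⟨c, rfl⟩ := hker k hk
    simp [dotProduct, ← sum_mul, sum_centeredIndicator]

theorem centeredIndicator_dotProduct_self_le {X : Matrix V V R} (hX : X.IsSymm) (S : Finset V)
    (hfix : (X * (incidenceMatrix R src tgt * (incidenceMatrix R src tgt)ᵀ)) *ᵥ
      centeredIndicator R S = centeredIndicator R S)
    (hpos : 0 < centeredIndicator R S ⬝ᵥ centeredIndicator R S) :
    centeredIndicator R S ⬝ᵥ centeredIndicator R S ≤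
      #(edgeBoundary src tgt S) *
        ∑ e ∈ edgeBoundary src tgt S, biharmonicDistSq R X (src e) (tgt e) := by
  refine le_card_mul_sum_of_sq_le hpos
    (d := (incidenceMatrix R src tgt)ᵀ *ᵥ (X *ᵥ centeredIndicator R S)) ?_ fun e _ => ?_
  · rw [dotProduct_self_eq_of_mul_mul_transpose_mulVec hX hfix]
    exact dotProduct_incidenceMatrix_transpose_mulVec_le src tgt S _ _
  · rw [incidenceMatrix_transpose_mulVec]
    exact hX.dotProduct_mulVec_sq_le _ _

end Graph

theorem sparse_cut_implies_large_biharmonic_general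
    {V E : Type*} [Fintype V] [DecidableEq V] [Fintype E]
    (vsrc vtgt : E → V)
    (Bd : Matrix V E ℝ)
    (hBd : Bd = fun v e => (if v = vsrc e then (1:ℝ) else 0) - (if v = vtgt e then 1 else 0))
    (L : Matrix V V ℝ) (hLdef : L = Bd * Bdᵀ)
    (hconn : ∀ x : V → ℝ, L *ᵥ x = 0 → ∃ c : ℝ, x = Function.const V c)
    (Lp : Matrix V V ℝ)
    (hp1 : L * Lp * L = L) (hp2 : Lp * L * Lp = Lp)
    (hp3 : (L * Lp)ᵀ = L * Lp) (hp4 : (Lp * L)ᵀ = Lp * L)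
    (S : Finset V) (hS1 : S.Nonempty) (hS2 : S ≠ Finset.univ) :
    ((S.card : ℝ) * (Sᶜ.card : ℝ)) /
        (((Finset.univ.filter (fun e => ¬ (vsrc e ∈ S ↔ vtgt e ∈ S))).card : ℝ) *
          (Fintype.card V : ℝ))
      ≤ ∑ e ∈ Finset.univ.filter (fun e => ¬ (vsrc e ∈ S ↔ vtgt e ∈ S)),
          (Pi.single (vsrc e) 1 - Pi.single (vtgt e) 1) ⬝ᵥ ((Lp * Lp) *ᵥ (Pi.single (vsrc e) 1 - Pi.single (vtgt e) 1)) ∧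
    ∃ e ∈ Finset.univ.filter (fun e => ¬ (vsrc e ∈ S ↔ vtgt e ∈ S)),
      ((S.card : ℝ) * (Sᶜ.card : ℝ)) /
          ((Fintype.card V : ℝ) *
            ((Finset.univ.filter (fun e => ¬ (vsrc e ∈ S ↔ vtgt e ∈ S))).card : ℝ) ^ 2)
        ≤ (Pi.single (vsrc e) 1 - Pi.single (vtgt e) 1) ⬝ᵥ ((Lp * Lp) *ᵥ (Pi.single (vsrc e) 1 - Pi.single (vtgt e) 1)) := by
  obtain rfl : Bd = incidenceMatrix ℝ vsrc vtgt := hBd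
  have hLp : L.IsMoorePenroseInverse Lp := ⟨hp1, hp2, hp3, hp4⟩
  have hL : L.IsSymm := hLdef ▸ transpose_mul _ _
  have hpos : 0 < centeredIndicator ℝ S ⬝ᵥ centeredIndicator ℝ S := by
    have hS : 0 < #S := card_pos.mpr hS1
    have hSc : 0 < #Sᶜ :=
      card_pos.mpr ((compl_ne_univ_iff_nonempty Sᶜ).mp (by rwa [compl_compl]))
    have hV : 0 < Fintype.card V := hS.trans_le (card_le_univ S)
    rw [centeredIndicator_dotProduct_self]
    positivity
  have hcut := centeredIndicator_dotProduct_self_le vsrc vtgt (hLp.isSymm hL) S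
    (hLdef ▸ hLp.mul_mulVec_centeredIndicator hconn S) hpos
  rw [centeredIndicator_dotProduct_self] at hpos hcut
  have hne : (edgeBoundary vsrc vtgt S).Nonempty := by
    rw [nonempty_iff_ne_empty]
    rintro hempty
    rw [hempty, sum_empty, mul_zero] at hcut
    exact hcut.not_gt hpos
  have hc : (0 : ℝ) < #(edgeBoundary vsrc vtgt S) := by exact_mod_cast hne.card_pos
  have hsum : (#S * #Sᶜ : ℝ) / (#(edgeBoundary vsrc vtgt S) * Fintype.card V) ≤
      ∑ e ∈ edgeBoundary vsrc vtgt S, biharmonicDistSq ℝ Lp (vsrc e) (vtgt e) := by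
    rwa [mul_comm _ (Fintype.card V : ℝ), ← div_div, div_le_iff₀' hc]
  refine ⟨hsum, exists_le_of_sum_le hne ?_⟩
  rw [sum_const, nsmul_eq_mul]
  calc (#(edgeBoundary vsrc vtgt S) : ℝ) *
        (#S * #Sᶜ / (Fintype.card V * #(edgeBoundary vsrc vtgt S) ^ 2))
      = #S * #Sᶜ / (#(edgeBoundary vsrc vtgt S) * Fintype.card V) := by field_simp
    _ ≤ _ := hsum

/-- For a connected unweighted graph and a nontrivial vertex subset S,
∑_(e crossing) B_e² ≥ |S||V∖S|/(|E(S,V∖S)|·n); in particular some crossing edge has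
B_e² ≥ |S||V∖S|/(n·|E(S,V∖S)|²). -/
theorem sparse_cut_implies_large_biharmonic
    {V E : Type*} [Fintype V] [DecidableEq V] [Fintype E] [DecidableEq E]
    (vsrc vtgt : E → V) (hsimple : ∀ e, vsrc e ≠ vtgt e)
    (Bd : Matrix V E ℝ)
    (hBd : Bd = fun v e => (if v = vsrc e then (1:ℝ) else 0) - (if v = vtgt e then 1 else 0))
    (L : Matrix V V ℝ) (hLdef : L = Bd * Bdᵀ)
    (hconn : ∀ x : V → ℝ, L *ᵥ x = 0 → ∃ c : ℝ, x = Function.const V c)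
    (Lp : Matrix V V ℝ)
    (hp1 : L * Lp * L = L) (hp2 : Lp * L * Lp = Lp)
    (hp3 : (L * Lp)ᵀ = L * Lp) (hp4 : (Lp * L)ᵀ = Lp * L)
    (S : Finset V) (hS1 : S.Nonempty) (hS2 : S ≠ Finset.univ) :
    ((S.card : ℝ) * (Sᶜ.card : ℝ)) /
        (((Finset.univ.filter (fun e => ¬ (vsrc e ∈ S ↔ vtgt e ∈ S))).card : ℝ) *
          (Fintype.card V : ℝ))
      ≤ ∑ e ∈ Finset.univ.filter (fun e => ¬ (vsrc e ∈ S ↔ vtgt e ∈ S)),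
          (Pi.single (vsrc e) 1 - Pi.single (vtgt e) 1) ⬝ᵥ ((Lp * Lp) *ᵥ (Pi.single (vsrc e) 1 - Pi.single (vtgt e) 1)) ∧
    ∃ e ∈ Finset.univ.filter (fun e => ¬ (vsrc e ∈ S ↔ vtgt e ∈ S)),
      ((S.card : ℝ) * (Sᶜ.card : ℝ)) /
          ((Fintype.card V : ℝ) *
            ((Finset.univ.filter (fun e => ¬ (vsrc e ∈ S ↔ vtgt e ∈ S))).card : ℝ) ^ 2)
        ≤ (Pi.single (vsrc e) 1 - Pi.single (vtgt e) 1) ⬝ᵥ ((Lp * Lp) *ᵥ (Pi.single (vsrc e) 1 - Pi.single (vtgt e) 1)) :=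
  sparse_cut_implies_large_biharmonic_general vsrc vtgt Bd hBd L hLdef hconn Lp hp1 hp2 hp3 hp4 S
    hS1 hS2
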